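/- arXiv:2208.08550 — 3 statements merged into one kernel-verified Lean document; each statement's English description precedes it below -/
import Mathlib

section
/- Let F be an infinite field and let I = T_{Z_3}(UT_3(F)^{(-)}) be the ideal of Z_3-graded identities of UT_3(F)^{(-)} with its canonical Z_3-grading. For i = 1, 2 and f, g ∈ B_i: (i) if V_f ≤ V_g in the Higman order on finite sequences of positive integers, then g is a consequence of f modulo I, i.e. g ∈ ⟨{f} ∪ I⟩; (ii) the set B_i quasi-ordered by f ≤ g iff V_f ≤ V_g satisfies the finite basis property (every infinite sequence in B_i has an infinite ascending subsequence). -/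
open FreeLieAlgebra

/-- The free `ℤ/n`-graded Lie algebra over `F`: the free Lie algebra on countably many
variables of each homogeneous degree `g : ZMod n`; the variable `(g, i)` is the `i`-th
variable of degree `g`. -/
abbrev FreeGLie (F : Type) [Field F] (n : ℕ) := FreeLieAlgebra F (ZMod n × ℕ)

/-- Homogeneous Lie monomials (bracket words) of degree `g`. -/
inductive HomWord (F : Type) [Field F] (n : ℕ) : ZMod n → FreeGLie F n → Prop
  | of (g : ZMod n) (i : ℕ) : HomWord F n g (FreeLieAlgebra.of F (g, i))
  | bracket {g h : ZMod n} {x y : FreeGLie F n} :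
      HomWord F n g x → HomWord F n h y → HomWord F n (g + h) ⁅x, y⁆

/-- The homogeneous component of degree `g` of the free graded Lie algebra. -/
noncomputable def homComp (F : Type) [Field F] (n : ℕ) (g : ZMod n) : Submodule F (FreeGLie F n) :=
  Submodule.span F {x | HomWord F n g x}

/-- A graded substitution sends each variable of degree `g` to a homogeneous element
of degree `g`; it induces a grading-preserving endomorphism via `FreeLieAlgebra.lift`,
and every grading-preserving endomorphism arises this way. -/
def IsGradedSubst (F : Type) [Field F] (n : ℕ) (s : ZMod n × ℕ → FreeGLie F n) : Prop :=
  ∀ g i, s (g, i) ∈ homComp F n g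

/-- `S` is a `T`-ideal: the carrier of a Lie ideal of the free graded Lie algebra which is
stable under all grading-preserving endomorphisms. -/
structure IsTIdeal (F : Type) [Field F] (n : ℕ) (S : Set (FreeGLie F n)) : Prop where
  isIdeal : ∃ J : LieIdeal F (FreeGLie F n), S = ↑J
  substClosed : ∀ s, IsGradedSubst F n s → ∀ x ∈ S, FreeLieAlgebra.lift F s x ∈ S

/-- The smallest `T`-ideal containing `S`. -/
def TClosure (F : Type) [Field F] (n : ℕ) (S : Set (FreeGLie F n)) : Set (FreeGLie F n) :=
  ⋂₀ {T | IsTIdeal F n T ∧ S ⊆ T}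

/-- The degree-`g` component of the canonical `ZMod n`-grading of `UT_n(F)⁽⁻⁾`:
the span of the matrix units `e_{ij}` with `i ≤ j` and `j - i = g` in `ZMod n`. -/
def Lcomp (F : Type) [Field F] (n : ℕ) (g : ZMod n) : Submodule F (Matrix (Fin n) (Fin n) F) :=
  Submodule.span F {A | ∃ i j : Fin n, i ≤ j ∧ ((j : ℕ) : ZMod n) - ((i : ℕ) : ZMod n) = g ∧
    A = Matrix.single i j 1}

attribute [local instance 100] LieRing.ofAssociativeRing

/-- The set of `ZMod n`-graded identities of `UT_n(F)⁽⁻⁾` (with commutator bracket),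
i.e. the elements of the free graded Lie algebra vanishing under every substitution that
sends each variable of degree `g` into the component `Lcomp F n g`. -/
def gradedId (F : Type) [Field F] (n : ℕ) : Set (FreeGLie F n) :=
  {f | ∀ v : ZMod n × ℕ → Matrix (Fin n) (Fin n) F,
    (∀ g i, v (g, i) ∈ Lcomp F n g) → FreeLieAlgebra.lift F v f = 0}

/-- The left-normed bracket `[x, l₁, l₂, …]`. -/
noncomputable def lnw (F : Type) [Field F] (n : ℕ) (x : FreeGLie F n)
    (l : List (FreeGLie F n)) : FreeGLie F n :=
  l.foldl (fun a b => ⁅a, b⁆) x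

/-- The degree-0 variable `y_i`. -/
noncomputable def yv (F : Type) [Field F] (n : ℕ) (i : ℕ) : FreeGLie F n :=
  FreeLieAlgebra.of F ((0 : ZMod n), i)

/-- The list `y_off, …, y_off (a₁ times), y_{off+1}, … (a₂ times), …` of degree-0
variables with multiplicities given by the list `a`. -/
noncomputable def yblock (F : Type) [Field F] (n : ℕ) : ℕ → List ℕ → List (FreeGLie F n)
  | _, [] => []
  | off, a :: rest => List.replicate a (yv F n off) ++ yblock F n (off + 1) rest

/-- The element `[u, a₁y₁, …, aₘyₘ]` of `B₁` (for `g = 1`, so `u = z` has degree 1) or of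
`B₂` (for `g = 2`, so `u = w` has degree 2), for an exponent list `a = (a₁,…,aₘ)`. -/
noncomputable def BelG (F : Type) [Field F] (n : ℕ) (g : ZMod n) (a : List ℕ) :
    FreeGLie F n :=
  lnw F n (FreeLieAlgebra.of F (g, 0)) (yblock F n 0 a)


/-! The degree-0 component of `UT_n(F)` is diagonal, hence commutative, so modulo the graded
identities the degree-0 variables in a left-normed word `[u, y_{i₁}, …, y_{iₖ}]` may be
permuted freely. A Higman embedding `a ≤ b` yields a map `ψ` of indices sending the multiset
of indices of the `y`'s in `f_a` into that of `f_b`; the graded substitution `yᵢ ↦ y_{ψ i}`,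
`u ↦ [u, (missing y's)]` then turns `f_a` into a rearrangement of `f_b`. Part (ii) is
Higman's lemma. -/

section GradedIdentities

variable {F : Type} [Field F] {n : ℕ}

lemma isDiag_of_mem_Lcomp_zero {A : Matrix (Fin n) (Fin n) F} (hA : A ∈ Lcomp F n 0) :
    A.IsDiag := by
  induction hA using Submodule.span_induction with
  | mem x hx =>
    obtain ⟨i, j, -, hdeg, rfl⟩ := hx
    obtain rfl : i = j := by
      rw [sub_eq_zero, ZMod.natCast_eq_natCast_iff', Nat.mod_eq_of_lt j.isLt,
        Nat.mod_eq_of_lt i.isLt] at hdeg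
      exact Fin.ext hdeg.symm
    intro a b hab
    apply Matrix.single_apply_of_ne
    rintro ⟨rfl, rfl⟩
    exact hab rfl
  | zero => exact Matrix.isDiag_zero
  | add x y _ _ hx hy => exact hx.add hy
  | smul c x _ hx => exact hx.smul c

lemma lie_eq_zero_of_mem_Lcomp_zero {A B : Matrix (Fin n) (Fin n) F}
    (hA : A ∈ Lcomp F n 0) (hB : B ∈ Lcomp F n 0) : ⁅A, B⁆ = 0 := by
  rw [Ring.lie_def, sub_eq_zero, ← (isDiag_of_mem_Lcomp_zero hA).diagonal_diag,
    ← (isDiag_of_mem_Lcomp_zero hB).diagonal_diag, Matrix.diagonal_mul_diagonal,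
    Matrix.diagonal_mul_diagonal]
  simp_rw [mul_comm]

lemma add_mem_gradedId {x y : FreeGLie F n} (hx : x ∈ gradedId F n) (hy : y ∈ gradedId F n) :
    x + y ∈ gradedId F n := fun v hv => by
  rw [map_add, hx v hv, hy v hv, add_zero]

lemma lie_mem_gradedId {x : FreeGLie F n} (hx : x ∈ gradedId F n) (a : FreeGLie F n) :
    ⁅x, a⁆ ∈ gradedId F n := fun v hv => by
  rw [LieHom.map_lie, hx v hv, zero_lie]

lemma lie_lie_yv_sub_lie_lie_yv_mem_gradedId (u : FreeGLie F n) (i j : ℕ) :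
    ⁅⁅u, yv F n i⁆, yv F n j⁆ - ⁅⁅u, yv F n j⁆, yv F n i⁆ ∈ gradedId F n := by
  have leibniz : ⁅⁅u, yv F n i⁆, yv F n j⁆ - ⁅⁅u, yv F n j⁆, yv F n i⁆
      = ⁅u, ⁅yv F n i, yv F n j⁆⁆ := by
    rw [lie_lie, ← lie_skew ⁅u, yv F n j⁆ (yv F n i)]
    abel
  intro v hv
  rw [leibniz, LieHom.map_lie, LieHom.map_lie, yv, yv, lift_of_apply, lift_of_apply,
    lie_eq_zero_of_mem_Lcomp_zero (hv 0 i) (hv 0 j), lie_zero]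

end GradedIdentities

section LeftNormed

variable {F : Type} [Field F] {n : ℕ}

@[simp]
lemma lnw_cons (x a : FreeGLie F n) (l : List (FreeGLie F n)) :
    lnw F n x (a :: l) = lnw F n ⁅x, a⁆ l := rfl

lemma lnw_append (x : FreeGLie F n) (l₁ l₂ : List (FreeGLie F n)) :
    lnw F n x (l₁ ++ l₂) = lnw F n (lnw F n x l₁) l₂ :=
  List.foldl_append

lemma lnw_sub_lnw (x y : FreeGLie F n) (l : List (FreeGLie F n)) :
    lnw F n x l - lnw F n y l = lnw F n (x - y) l := by
  induction l generalizing x y with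
  | nil => rfl
  | cons a l ih => rw [lnw_cons, lnw_cons, lnw_cons, ih, sub_lie]

lemma lnw_mem_gradedId {x : FreeGLie F n} (hx : x ∈ gradedId F n) (l : List (FreeGLie F n)) :
    lnw F n x l ∈ gradedId F n := by
  induction l generalizing x with
  | nil => exact hx
  | cons a l ih => exact ih (lie_mem_gradedId hx a)

lemma lift_lnw (s : ZMod n × ℕ → FreeGLie F n) (x : FreeGLie F n) (l : List (FreeGLie F n)) :
    FreeLieAlgebra.lift F s (lnw F n x l)
      = lnw F n (FreeLieAlgebra.lift F s x) (l.map (FreeLieAlgebra.lift F s)) := by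
  induction l generalizing x with
  | nil => rfl
  | cons a l ih => rw [lnw_cons, ih, List.map_cons, lnw_cons, LieHom.map_lie]

lemma lnw_map_yv_sub_mem_gradedId_of_perm {l l' : List ℕ} (h : l.Perm l') (u : FreeGLie F n) :
    lnw F n u (l.map (yv F n)) - lnw F n u (l'.map (yv F n)) ∈ gradedId F n := by
  induction h generalizing u with
  | nil => exact fun v _ => by rw [sub_self, map_zero]
  | cons i _ ih => exact ih ⁅u, yv F n i⁆
  | swap i j l =>
    simp only [List.map_cons, lnw_cons]
    rw [lnw_sub_lnw]
    exact lnw_mem_gradedId (lie_lie_yv_sub_lie_lie_yv_mem_gradedId u j i) _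
  | trans _ _ ih₁ ih₂ =>
    simpa only [sub_add_sub_cancel] using add_mem_gradedId (ih₁ u) (ih₂ u)

lemma HomWord.lnw_map_yv {g : ZMod n} {x : FreeGLie F n} (hx : HomWord F n g x) (l : List ℕ) :
    HomWord F n g (lnw F n x (l.map (yv F n))) := by
  induction l generalizing x with
  | nil => exact hx
  | cons i l ih => simpa using ih (add_zero g ▸ hx.bracket (HomWord.of 0 i))

end LeftNormed

def blockIndices : ℕ → List ℕ → List ℕ
  | _, [] => []
  | k, a :: l => List.replicate a k ++ blockIndices (k + 1) l

lemma yblock_eq_map_blockIndices (F : Type) [Field F] (n : ℕ) (k : ℕ) (a : List ℕ) :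
    yblock F n k a = (blockIndices k a).map (yv F n) := by
  induction a generalizing k with
  | nil => rfl
  | cons x l ih => simp [yblock, blockIndices, ih]

lemma blockIndices_succ (k : ℕ) (a : List ℕ) :
    blockIndices (k + 1) a = (blockIndices k a).map (· + 1) := by
  induction a generalizing k with
  | nil => rfl
  | cons x l ih => simp [blockIndices, ih (k + 1)]

lemma coe_blockIndices_zero_cons (a : ℕ) (l : List ℕ) :
    (blockIndices 0 (a :: l) : Multiset ℕ)
      = Multiset.replicate a 0 + (blockIndices 0 l : Multiset ℕ).map (· + 1) := by
  rw [blockIndices, blockIndices_succ, ← Multiset.coe_add, Multiset.coe_replicate,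
    Multiset.map_coe]

lemma exists_map_blockIndices_le_of_sublistForall₂ {a b : List ℕ}
    (h : List.SublistForall₂ (· ≤ ·) a b) :
    ∃ ψ : ℕ → ℕ, (blockIndices 0 a : Multiset ℕ).map ψ ≤ blockIndices 0 b := by
  induction h with
  | nil => exact ⟨id, by simp [blockIndices]⟩
  | @cons x y _ _ hxy _ ih =>
    obtain ⟨ψ, hψ⟩ := ih
    refine ⟨fun k => if k = 0 then 0 else ψ (k - 1) + 1, ?_⟩
    rw [coe_blockIndices_zero_cons, coe_blockIndices_zero_cons, Multiset.map_add,
      Multiset.map_replicate, Multiset.map_map]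
    refine add_le_add (by simpa using (Multiset.replicate_le_replicate 0).mpr hxy) ?_
    have hcomm : (fun k => if k = 0 then 0 else ψ (k - 1) + 1) ∘ (· + 1) = (· + 1) ∘ ψ := by
      funext k; simp
    rw [hcomm, ← Multiset.map_map]
    exact Multiset.map_le_map hψ
  | @cons_right y _ _ _ ih =>
    obtain ⟨ψ, hψ⟩ := ih
    refine ⟨(· + 1) ∘ ψ, ?_⟩
    rw [coe_blockIndices_zero_cons, ← Multiset.map_map]
    exact (Multiset.map_le_map hψ).trans (Multiset.le_add_left _ _)

section Substitution

variable (F : Type) [Field F] {n : ℕ}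

noncomputable def embedSubst (g : ZMod n) (ψ : ℕ → ℕ) (e : List ℕ) :
    ZMod n × ℕ → FreeGLie F n :=
  fun p => if p.1 = 0 then yv F n (ψ p.2)
    else if p = (g, 0) then lnw F n (FreeLieAlgebra.of F (g, 0)) (e.map (yv F n))
    else FreeLieAlgebra.of F p

lemma isGradedSubst_embedSubst (g : ZMod n) (ψ : ℕ → ℕ) (e : List ℕ) :
    IsGradedSubst F n (embedSubst F g ψ e) := by
  intro g' i
  apply Submodule.subset_span
  unfold embedSubst
  split_ifs with h₀ hg
  · obtain rfl : g' = 0 := h₀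
    exact HomWord.of 0 (ψ i)
  · obtain ⟨rfl, rfl⟩ := Prod.mk.inj hg
    exact (HomWord.of g' 0).lnw_map_yv e
  · exact HomWord.of g' i

lemma lift_embedSubst_BelG {g : ZMod n} (hg : g ≠ 0) (ψ : ℕ → ℕ) (e a : List ℕ) :
    FreeLieAlgebra.lift F (embedSubst F g ψ e) (BelG F n g a)
      = lnw F n (FreeLieAlgebra.of F (g, 0)) ((e ++ (blockIndices 0 a).map ψ).map (yv F n)) := by
  have hy : ∀ i, FreeLieAlgebra.lift F (embedSubst F g ψ e) (yv F n i) = yv F n (ψ i) := by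
    intro i
    simp [yv, embedSubst]
  rw [BelG, lift_lnw, lift_of_apply, yblock_eq_map_blockIndices, List.map_map, List.map_append,
    lnw_append, List.map_map]
  simp [embedSubst, hg, Function.comp_def, hy]

end Substitution

lemma mem_TClosure_of_sub_lift_mem {F : Type} [Field F] {n : ℕ} {S : Set (FreeGLie F n)}
    {s : ZMod n × ℕ → FreeGLie F n} (hs : IsGradedSubst F n s) {x y : FreeGLie F n}
    (hx : x ∈ S) (hyx : y - FreeLieAlgebra.lift F s x ∈ S) : y ∈ TClosure F n S := by
  rintro T ⟨hT, hST⟩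
  obtain ⟨J, rfl⟩ := hT.isIdeal
  simpa using J.add_mem (hT.substClosed s hs x (hST hx)) (hST hyx)

theorem BelG_mem_TClosure_of_sublistForall₂ (F : Type) [Field F] {n : ℕ} {g : ZMod n}
    (hg : g ≠ 0) {a b : List ℕ} (hab : List.SublistForall₂ (· ≤ ·) a b) :
    BelG F n g b ∈ TClosure F n ({BelG F n g a} ∪ gradedId F n) := by
  obtain ⟨ψ, hψ⟩ := exists_map_blockIndices_le_of_sublistForall₂ hab
  set e := ((blockIndices 0 b : Multiset ℕ) - (blockIndices 0 a : Multiset ℕ).map ψ).toList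
  have hperm : (blockIndices 0 b).Perm (e ++ (blockIndices 0 a).map ψ) := by
    rw [← Multiset.coe_eq_coe, ← Multiset.coe_add, Multiset.coe_toList, ← Multiset.map_coe,
      tsub_add_cancel_of_le hψ]
  refine mem_TClosure_of_sub_lift_mem (isGradedSubst_embedSubst F g ψ e) (Or.inl rfl) (Or.inr ?_)
  rw [lift_embedSubst_BelG F hg, BelG, yblock_eq_map_blockIndices]
  exact lnw_map_yv_sub_mem_gradedId_of_perm hperm _

theorem List.exists_strictMono_sublistForall₂ {α : Type*} [Preorder α] [WellQuasiOrderedLE α]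
    (f : ℕ → List α) :
    ∃ φ : ℕ → ℕ, StrictMono φ ∧
      ∀ i j, i ≤ j → List.SublistForall₂ (· ≤ ·) (f (φ i)) (f (φ j)) := by
  have : IsPreorder (List α) (List.SublistForall₂ (· ≤ ·)) := {}
  have higman := (Set.isPWO_of_wellQuasiOrderedLE (Set.univ : Set α))
    |>.partiallyWellOrderedOn_sublistForall₂ (· ≤ ·)
  obtain ⟨φ, hφ⟩ := higman.exists_monotone_subseq (f := f) fun _ x _ => Set.mem_univ x
  exact ⟨φ, φ.strictMono, hφ⟩

theorem stmt3_general (F : Type) [Field F] (g : ZMod 3) (hg : g = 1 ∨ g = 2) :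
    (∀ a b : List ℕ, a ≠ [] → (∀ x ∈ a, 0 < x) → b ≠ [] → (∀ x ∈ b, 0 < x) →
        List.SublistForall₂ (· ≤ ·) a b →
        BelG F 3 g b ∈ TClosure F 3 ({BelG F 3 g a} ∪ gradedId F 3)) ∧
    (∀ f : ℕ → List ℕ, (∀ m, f m ≠ [] ∧ ∀ x ∈ f m, 0 < x) →
        ∃ φ : ℕ → ℕ, StrictMono φ ∧
          ∀ i j, i ≤ j → List.SublistForall₂ (· ≤ ·) (f (φ i)) (f (φ j))) := by
  have hg₀ : g ≠ 0 := by rcases hg with rfl | rfl <;> decide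
  exact ⟨fun a b _ _ _ _ hab => BelG_mem_TClosure_of_sublistForall₂ F hg₀ hab,
    fun f _ => List.exists_strictMono_sublistForall₂ f⟩

/-- For `i = 1, 2` (i.e. for a generator of degree `g = 1` resp. `g = 2`)
and `f, g ∈ Bᵢ`: (i) if `V_f ≤ V_g` in the Higman order then `g` is a consequence of `f`
modulo the ideal `I` of `ZMod 3`-graded identities of `UT₃(F)⁽⁻⁾`; (ii) `Bᵢ`, quasi-ordered
by comparing the exponent sequences `V` in the Higman order, is well-quasi-ordered. -/
theorem stmt3 (F : Type) [Field F] [Infinite F] (g : ZMod 3) (hg : g = 1 ∨ g = 2) :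
    (∀ a b : List ℕ, a ≠ [] → (∀ x ∈ a, 0 < x) → b ≠ [] → (∀ x ∈ b, 0 < x) →
        List.SublistForall₂ (· ≤ ·) a b →
        BelG F 3 g b ∈ TClosure F 3 ({BelG F 3 g a} ∪ gradedId F 3)) ∧
    (∀ f : ℕ → List ℕ, (∀ m, f m ≠ [] ∧ ∀ x ∈ f m, 0 < x) →
        ∃ φ : ℕ → ℕ, StrictMono φ ∧
          ∀ i j, i ≤ j → List.SublistForall₂ (· ≤ ·) (f (φ i)) (f (φ j))) :=
  stmt3_general F g hg
end

section
/- Let F be an infinite field, z_1, z_2 degree-1 variables and y_1,…,y_n degree-0 variables in the free Z_3-graded Lie algebra. Then the commutators c = [z_1, a_1 y_1,…,a_n y_n, z_2, b_1 y_1,…,b_n y_n], over all choices of nonnegative integer exponent vectors (a_1,…,a_n) and (b_1,…,b_n), are linearly independent modulo the ideal of Z_3-graded identities of UT_3(F)^{(-)} with its canonical Z_3-grading: no nontrivial F-linear combination of distinct such commutators is a Z_3-graded identity of UT_3(F)^{(-)}. -/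
/-!
Substitute `z₁ ↦ e₁₂`, `z₂ ↦ e₂₃` and `yᵢ ↦ diag(0, βᵢ, γᵢ)`. Bracketing with
`diag(0, β, γ)` multiplies `e₁₂` by `β` and `e₁₃` by `γ`, and `[e₁₂, e₂₃] = e₁₃`, so
`[z₁, a₁y₁, …, aₘyₘ, z₂, b₁y₁, …, bₘyₘ]` evaluates to `∏ βᵢ ^ aᵢ * ∏ γᵢ ^ bᵢ • e₁₃`.
A graded identity `∑ c_{ab} [z₁, a y, z₂, b y]` thus gives a polynomial `∑ c_{ab} β^a γ^b`
that vanishes on all of `F^{2m}`; over an infinite field all its coefficients vanish.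
-/

open FreeLieAlgebra

attribute [local instance 100] LieRing.ofAssociativeRing

/-- The block `a₁y₁, …, aₘyₘ`: the list of degree-0 variables `y₀,…,y_{m-1}` with
multiplicities `a 0, …, a (m-1)`. -/
noncomputable def ybF (F : Type) [Field F] (n m : ℕ) (a : Fin m → ℕ) :
    List (FreeGLie F n) :=
  (List.finRange m).flatMap fun i => List.replicate (a i) (yv F n i.val)

/-- The element `[z₁, a₁y₁,…,aₘyₘ, z₂, b₁y₁,…,bₘyₘ]` of `B₍₁,₁₎`, where `z₁, z₂` are the
degree-1 variables `(1,0)`, `(1,1)`. -/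
noncomputable def com11 (F : Type) [Field F] (m : ℕ) (a b : Fin m → ℕ) : FreeGLie F 3 :=
  lnw F 3 (FreeLieAlgebra.of F ((1 : ZMod 3), 0))
    (ybF F 3 m a ++ [FreeLieAlgebra.of F ((1 : ZMod 3), 1)] ++ ybF F 3 m b)

open Matrix

theorem LieHom.map_foldl_lie {R L L' : Type*} [CommRing R] [LieRing L] [LieAlgebra R L]
    [LieRing L'] [LieAlgebra R L'] (f : L →ₗ⁅R⁆ L') (x : L) (l : List L) :
    f (l.foldl (⁅·, ·⁆) x) = (l.map f).foldl (⁅·, ·⁆) (f x) := by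
  induction l generalizing x with
  | nil => rfl
  | cons y l ih => simp [ih]

theorem foldl_lie_map_eq_prod_smul {R L ι : Type*} [CommRing R] [LieRing L] [LieAlgebra R L]
    {M : L} {D : ι → L} {w : ι → R} (hM : ∀ i, ⁅M, D i⁆ = w i • M) (l : List ι) (t : R) :
    (l.map D).foldl (⁅·, ·⁆) (t • M) = ((l.map w).prod * t) • M := by
  induction l generalizing t with
  | nil => simp
  | cons i l ih => simp [smul_lie, hM, smul_smul, ih, mul_assoc, mul_comm (w i)]

theorem Matrix.lie_single_diagonal {n R : Type*} [Fintype n] [DecidableEq n] [CommRing R]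
    (i j : n) (r : R) (d : n → R) :
    ⁅single i j r, diagonal d⁆ = (d j - d i) • single i j r := by
  ext k l
  simp only [Ring.lie_def, sub_apply, mul_diagonal, diagonal_mul, smul_apply, single_apply,
    smul_eq_mul]
  split_ifs with h
  · rw [h.1, h.2]; ring
  · simp

theorem single_one_mem_Lcomp {F : Type} [Field F] {n : ℕ} {i j : Fin n} {g : ZMod n}
    (hij : i ≤ j) (hg : ((j : ℕ) : ZMod n) - ((i : ℕ) : ZMod n) = g) :
    single i j 1 ∈ Lcomp F n g :=
  Submodule.subset_span ⟨i, j, hij, hg, rfl⟩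

theorem diagonal_mem_Lcomp_zero {F : Type} [Field F] {n : ℕ} (d : Fin n → F) :
    diagonal d ∈ Lcomp F n 0 := by
  rw [← sum_single_eq_diagonal]
  refine Submodule.sum_mem _ fun i _ => ?_
  have h := (Lcomp F n 0).smul_mem (d i) (single_one_mem_Lcomp (le_refl i) (sub_self _))
  rwa [smul_single, smul_eq_mul, mul_one] at h

theorem MvPolynomial.coeff_eq_zero_of_forall_sum_mul_prod_pow_eq_zero {R σ ι : Type*}
    [CommRing R] [IsDomain R] [Infinite R] [Fintype σ] {s : Finset ι} {e : ι → σ → ℕ}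
    (he : Function.Injective e) {c : ι → R}
    (h : ∀ x : σ → R, ∑ i ∈ s, c i * ∏ j, x j ^ e i j = 0) : ∀ i ∈ s, c i = 0 := by
  classical
  set P : MvPolynomial σ R := ∑ i ∈ s, monomial (Finsupp.equivFunOnFinite.symm (e i)) (c i)
  have hP : P = 0 := funext fun x => by
    simpa [P, eval_monomial, Finsupp.prod_fintype] using h x
  intro i hi
  have hcoeff := congrArg (coeff (Finsupp.equivFunOnFinite.symm (e i))) hP
  rwa [coeff_sum, Finset.sum_eq_single i (fun k _ hk => by simp [coeff_monomial, he.ne hk])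
    (absurd hi), coeff_monomial, if_pos rfl, coeff_zero] at hcoeff

section Evaluation

variable {F : Type} [Field F]

def repList {m : ℕ} (a : Fin m → ℕ) : List (Fin m) :=
  (List.finRange m).flatMap fun i => List.replicate (a i) i

theorem ybF_eq_map_repList {m : ℕ} (a : Fin m → ℕ) :
    ybF F 3 m a = (repList a).map fun i => yv F 3 i.val := by
  simp [ybF, repList, List.map_flatMap]

theorem prod_map_repList {M : Type*} [CommMonoid M] {m : ℕ} (a : Fin m → ℕ) (w : Fin m → M) :
    ((repList a).map w).prod = ∏ i, w i ^ a i := by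
  rw [repList, List.map_flatMap, List.flatMap, List.prod_flatten, List.map_map,
    Fin.prod_univ_def]
  simp [Function.comp_def, List.prod_replicate]

-- Matrix indices are 0-based: `single 0 1 1` is `e₁₂`.
noncomputable def evalSubst {m : ℕ} (β γ : Fin m → F) : ZMod 3 × ℕ → Matrix (Fin 3) (Fin 3) F :=
  fun p =>
    if p.1 = 0 then
      if h : p.2 < m then diagonal ![0, β ⟨p.2, h⟩, γ ⟨p.2, h⟩] else 0
    else if p.1 = 1 then
      if p.2 = 0 then single 0 1 1 else if p.2 = 1 then single 1 2 1 else 0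
    else 0

theorem evalSubst_mem_Lcomp {m : ℕ} (β γ : Fin m → F) (g : ZMod 3) (i : ℕ) :
    evalSubst β γ (g, i) ∈ Lcomp F 3 g := by
  unfold evalSubst
  split_ifs with h0 _ h1
  · subst h0
    exact diagonal_mem_Lcomp_zero _
  · exact zero_mem _
  · subst h1
    exact single_one_mem_Lcomp (by decide) (by decide)
  · subst h1
    exact single_one_mem_Lcomp (by decide) (by decide)
  all_goals exact zero_mem _

theorem lift_evalSubst_yv {m : ℕ} (β γ : Fin m → F) (i : Fin m) :
    lift F (evalSubst β γ) (yv F 3 i.val) = diagonal ![0, β i, γ i] := by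
  simp [yv, evalSubst]

theorem lift_evalSubst_com11 {m : ℕ} (β γ : Fin m → F) (a b : Fin m → ℕ) :
    lift F (evalSubst β γ) (com11 F m a b) =
      ((∏ i, β i ^ a i) * ∏ i, γ i ^ b i) • single 0 2 1 := by
  have hyv : lift F (evalSubst β γ) ∘ (fun i : Fin m => yv F 3 i.val) =
      fun i => diagonal ![0, β i, γ i] := funext (lift_evalSubst_yv β γ)
  have hz₁ : lift F (evalSubst β γ) (of F (1, 0)) = single 0 1 1 := by simp [evalSubst]
  have hz₂ : lift F (evalSubst β γ) (of F (1, 1)) = single 1 2 1 := by simp [evalSubst]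
  have hz₁z₂ : ⁅(single 0 1 1 : Matrix (Fin 3) (Fin 3) F),
      (single 1 2 1 : Matrix (Fin 3) (Fin 3) F)⁆ = single 0 2 1 := by
    simp [Ring.lie_def, single_mul_single_same, single_mul_single_of_ne]
  have hblock₁ := foldl_lie_map_eq_prod_smul (M := single (0 : Fin 3) (1 : Fin 3) (1 : F))
    (D := fun i => diagonal ![0, β i, γ i]) (w := β)
    (fun i => by rw [lie_single_diagonal]; simp) (repList a) 1
  have hblock₂ := foldl_lie_map_eq_prod_smul (M := single (0 : Fin 3) (2 : Fin 3) (1 : F))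
    (D := fun i => diagonal ![0, β i, γ i]) (w := γ)
    (fun i => by rw [lie_single_diagonal]; simp) (repList b) (∏ i, β i ^ a i)
  rw [one_smul] at hblock₁
  rw [com11, lnw, LieHom.map_foldl_lie, List.map_append, List.map_append, List.foldl_append,
    List.foldl_append, ybF_eq_map_repList, ybF_eq_map_repList, List.map_map, List.map_map, hyv,
    hz₁, hblock₁, prod_map_repList, mul_one, List.map_singleton, List.foldl_cons, List.foldl_nil,
    hz₂, smul_lie, hz₁z₂, hblock₂, prod_map_repList, mul_comm]

end Evaluation

/-- The commutators `[z₁, a₁y₁,…,aₘyₘ, z₂, b₁y₁,…,bₘyₘ]`, over all choices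
of nonnegative exponent vectors `(a, b)`, are linearly independent modulo the ideal of
`ZMod 3`-graded identities of `UT₃(F)⁽⁻⁾`: no nontrivial `F`-linear combination of distinct
such commutators is a graded identity of `UT₃(F)⁽⁻⁾`. -/
theorem stmt7 (F : Type) [Field F] [Infinite F] (m : ℕ)
    (s : Finset ((Fin m → ℕ) × (Fin m → ℕ))) (c : (Fin m → ℕ) × (Fin m → ℕ) → F)
    (h : (∑ ab ∈ s, c ab • com11 F m ab.1 ab.2) ∈ gradedId F 3) :
    ∀ ab ∈ s, c ab = 0 := by
  have hmonomials : ∀ β γ : Fin m → F,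
      ∑ p ∈ s, c p * ((∏ i, β i ^ p.1 i) * ∏ i, γ i ^ p.2 i) = 0 := fun β γ => by
    have h02 := congrFun (congrFun (h (evalSubst β γ) (evalSubst_mem_Lcomp β γ)) 0) 2
    simpa [map_sum, lift_evalSubst_com11, Matrix.sum_apply] using h02
  refine MvPolynomial.coeff_eq_zero_of_forall_sum_mul_prod_pow_eq_zero
    (e := fun p : (Fin m → ℕ) × (Fin m → ℕ) => Sum.elim p.1 p.2) ?_ fun x => ?_
  · intro p q hpq
    exact Prod.ext (funext fun i => congrFun hpq (.inl i)) (funext fun i => congrFun hpq (.inr i))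
  · simpa [Fintype.prod_sum_type] using hmonomials (x ∘ Sum.inl) (x ∘ Sum.inr)
end

section
/- Let F be an infinite field, n ≥ 3, and let z_1,…,z_k be variables of nonzero degrees g_1,…,g_k ∈ Z_n with g_1 + ⋯ + g_k ≤ n − 1 (as integers in {1,…,n−1}), and y_1,…,y_t degree-0 variables. Then the commutators c = [z_1, a_1^{(1)}y_1,…,a_t^{(1)}y_t, z_2, a_1^{(2)}y_1,…,a_t^{(2)}y_t, …, z_k, a_1^{(k)}y_1,…,a_t^{(k)}y_t], over all choices of nonnegative integer exponents a_i^{(s)} (1 ≤ i ≤ t, 1 ≤ s ≤ k), are linearly independent modulo the ideal of Z_n-graded identities of UT_n(F)^{(-)} with its canonical Z_n-grading: no nontrivial F-linear combination of distinct such commutators is a Z_n-graded identity of UT_n(F)^{(-)}. -/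
open FreeLieAlgebra

attribute [local instance 100] LieRing.ofAssociativeRing

/-- The variable `z_j` of nonzero degree `g j` (the `j`-th of the `k+1` fixed variables of
nonzero degree; distinct `j` give distinct variables). -/
noncomputable def zvG (F : Type) [Field F] (n k : ℕ) (g : Fin (k + 1) → ZMod n)
    (j : Fin (k + 1)) : FreeGLie F n :=
  FreeLieAlgebra.of F (g j, j.val)

/-- The block of degree-0 variables `y_off, y_{off+1}, …` with multiplicities given by the
`s`-components of the tuples in the list `p`. -/
noncomputable def ybT (F : Type) [Field F] (n k : ℕ) (s : Fin (k + 1)) :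
    ℕ → List (Fin (k + 1) → ℕ) → List (FreeGLie F n)
  | _, [] => []
  | off, t :: rest => List.replicate (t s) (yv F n off) ++ ybT F n k s (off + 1) rest

/-- The element
`[z₁, a₁⁽¹⁾y₁,…,aₘ⁽¹⁾yₘ, z_{σ(2)}, a₁⁽²⁾y₁,…,aₘ⁽²⁾yₘ, …, z_{σ(k+1)}, a₁⁽ᵏ⁺¹⁾y₁,…,aₘ⁽ᵏ⁺¹⁾yₘ]`
of `B₍g₁,…,g_{k+1}₎`, where the `i`-th entry of the list `p` is the tuple
`(aᵢ⁽¹⁾, …, aᵢ⁽ᵏ⁺¹⁾)` of exponents of `yᵢ`, so `p` is exactly the sequence `V` attached to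
the element. -/
noncomputable def BgEl (F : Type) [Field F] (n k : ℕ) (g : Fin (k + 1) → ZMod n)
    (σ : Equiv.Perm (Fin (k + 1))) (p : List (Fin (k + 1) → ℕ)) : FreeGLie F n :=
  lnw F n (zvG F n k g 0)
    ((List.finRange (k + 1)).flatMap fun s =>
      (if s = 0 then [] else [zvG F n k g (σ s)]) ++ ybT F n k s 0 p)

/-- The element of `B₍g₁,…,g_{k+1}₎` with exponent matrix `a` (the variable `yᵢ` occurs
`a i s` times in the block after the `s`-th `z`-variable), for a permutation `σ`. -/
noncomputable def BgF (F : Type) [Field F] (n k m : ℕ) (g : Fin (k + 1) → ZMod n)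
    (σ : Equiv.Perm (Fin (k + 1))) (a : Fin m → Fin (k + 1) → ℕ) : FreeGLie F n :=
  BgEl F n k g σ ((List.finRange m).map a)

/-!
Choose positions `q₀ < q₁ < ⋯ < q_{k+1}` in `{0, …, n-1}` with `q_{j+1} - q_j = g_j` (possible
because `∑ g_j ≤ n - 1`), send `z_j` to the matrix unit `e_{q_j, q_{j+1}}` and `y_i` to a diagonal
matrix `D_i`. Since `⁅e_{p,r}, D⁆ = (D_r - D_p) e_{p,r}`, the commutator with exponents `a`
evaluates to `∏_{i,s} t_{i,s}^{a_i^{(s)}} · e_{q₀, q_{k+1}}` with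
`t_{i,s} = (D_i)_{q_{s+1}} - (D_i)_{q₀}`. These differences can be prescribed arbitrarily, so a
linear combination of the commutators that is a graded identity gives a polynomial in the `t_{i,s}`
vanishing on all of `F^{m(k+1)}`; over an infinite field its coefficients are zero.
-/

namespace Matrix

variable {R ι : Type*} [CommRing R] [Fintype ι] [DecidableEq ι]

theorem lie_single_of_isDiag {M : Matrix ι ι R} (hM : M.IsDiag) (i j : ι) (c : R) :
    ⁅single i j c, M⁆ = single i j (c * (M j j - M i i)) := by
  obtain ⟨d, rfl⟩ : ∃ d, M = diagonal d := ⟨_, hM.diagonal_diag.symm⟩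
  ext a b
  simp only [Ring.lie_def, sub_apply, mul_diagonal, diagonal_mul, single_apply,
    diagonal_apply_eq]
  split_ifs with h
  · obtain ⟨rfl, rfl⟩ := h
    ring
  · ring

theorem lie_single_single {i l : ι} (h : l ≠ i) (j : ι) (c d : R) :
    ⁅single i j c, single j l d⁆ = single i l (c * d) := by
  rw [Ring.lie_def, single_mul_single_same, single_mul_single_of_ne (h := h), sub_zero]

theorem foldl_lie_single_of_isDiag (L : List (Matrix ι ι R)) (hL : ∀ M ∈ L, M.IsDiag)
    (i j : ι) (c : R) :
    L.foldl (fun a b => ⁅a, b⁆) (single i j c)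
      = single i j (c * (L.map fun M => M j j - M i i).prod) := by
  induction L generalizing c with
  | nil => simp
  | cons M L ih =>
    rw [List.foldl_cons, lie_single_of_isDiag (hL M List.mem_cons_self),
      ih (fun M' hM' => hL M' (List.mem_cons_of_mem M hM')), List.map_cons, List.prod_cons,
      mul_assoc]

theorem foldl_lie_single_path {N : ℕ} (q : Fin (N + 1) → ι) (i : ι)
    (hq : ∀ s : Fin N, q s.succ ≠ i) (D : Fin N → List (Matrix ι ι R))
    (hD : ∀ s, ∀ M ∈ D s, M.IsDiag) (c : R) :
    ((List.finRange N).flatMap fun s => single (q s.castSucc) (q s.succ) 1 :: D s).foldl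
        (fun a b => ⁅a, b⁆) (single i (q 0) c)
      = single i (q (Fin.last N))
          (c * ∏ s, ((D s).map fun M => M (q s.succ) (q s.succ) - M i i).prod) := by
  induction N generalizing c with
  | zero => simp
  | succ N ih =>
    rw [List.finRange_succ, List.flatMap_cons, List.flatMap_map, List.cons_append,
      List.foldl_cons, List.foldl_append, Fin.castSucc_zero, lie_single_single (hq 0), mul_one,
      foldl_lie_single_of_isDiag _ (hD 0)]
    have := ih (fun j => q j.succ) (fun s => hq s.succ) (fun s => D s.succ) (fun s => hD s.succ)
      (c * ((D 0).map fun M => M (q (Fin.succ 0)) (q (Fin.succ 0)) - M i i).prod)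
    simp only [Fin.succ_castSucc, Fin.succ_last] at this
    rw [this, Fin.prod_univ_succ, mul_assoc]

end Matrix

section FreeLie

variable {F : Type} [Field F] {n : ℕ}

theorem LieHom.map_lnw {L : Type*} [LieRing L] [LieAlgebra F L] (f : FreeGLie F n →ₗ⁅F⁆ L)
    (x : FreeGLie F n) (l : List (FreeGLie F n)) :
    f (lnw F n x l) = (l.map f).foldl (fun a b => ⁅a, b⁆) (f x) := by
  induction l generalizing x with
  | nil => rfl
  | cons b l ih => exact (ih ⁅x, b⁆).trans (by rw [LieHom.map_lie]; rfl)

theorem exists_eq_yv_of_mem_ybT {k : ℕ} {s : Fin (k + 1)} {off : ℕ}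
    {p : List (Fin (k + 1) → ℕ)} {x : FreeGLie F n} (hx : x ∈ ybT F n k s off p) :
    ∃ i, x = yv F n i := by
  induction p generalizing off with
  | nil => simp [ybT] at hx
  | cons t p ih =>
    rcases List.mem_append.1 hx with hx | hx
    · exact ⟨off, List.eq_of_mem_replicate hx⟩
    · exact ih hx

theorem prod_map_ybT {M : Type*} [CommMonoid M] (φ : FreeGLie F n → M) {k : ℕ}
    (s : Fin (k + 1)) {m : ℕ} (a : Fin m → Fin (k + 1) → ℕ) (off : ℕ) :
    ((ybT F n k s off ((List.finRange m).map a)).map φ).prod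
      = ∏ i : Fin m, φ (yv F n (off + i)) ^ a i s := by
  induction m generalizing off with
  | zero => simp [ybT]
  | succ m ih =>
    rw [List.finRange_succ, List.map_cons, List.map_map, ybT, List.map_append, List.prod_append,
      List.map_replicate, List.prod_replicate, ih, Fin.prod_univ_succ]
    simp only [Function.comp_apply, Fin.val_zero, Fin.val_succ, add_zero]
    congr 1
    exact Fintype.prod_congr _ _ fun i => by rw [add_assoc, add_comm 1]

end FreeLie

section GradedPath

variable {F : Type} [Field F] {n N : ℕ}

def IsGradedPath (g : Fin N → ZMod n) (q : Fin (N + 1) → Fin n) : Prop :=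
  StrictMono q ∧ ∀ j, ((q j.succ : ℕ) : ZMod n) - ((q j.castSucc : ℕ) : ZMod n) = g j

theorem exists_isGradedPath (g : Fin N → ZMod n) (hg : ∀ j, g j ≠ 0)
    (hsum : ∑ j, (g j).val < n) : ∃ q, IsGradedPath g q := by
  have : NeZero n := ⟨by omega⟩
  have hQ : StrictMono (Fin.partialSum fun j => (g j).val) :=
    Fin.strictMono_iff_lt_succ.2 fun j => by
      rw [Fin.partialSum_succ]
      exact Nat.lt_add_of_pos_right (Nat.pos_of_ne_zero ((ZMod.val_ne_zero _).2 (hg j)))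
  have hlast : Fin.partialSum (fun j => (g j).val) (Fin.last N) = ∑ j, (g j).val := by
    simp [Fin.partialSum, List.take_of_length_le, List.sum_ofFn]
  refine ⟨fun j => ⟨_, (hQ.monotone (Fin.le_last j)).trans_lt (hlast ▸ hsum)⟩,
    fun a b hab => hQ hab, fun j => ?_⟩
  simp only [Fin.partialSum_succ, Nat.cast_add, add_sub_cancel_left, ZMod.natCast_zmod_val]

theorem exists_sub_eq_of_injective {m : ℕ} {q : Fin (N + 1) → Fin n} (hq : Function.Injective q)
    (x : Fin m → Fin N → F) :
    ∃ w : Fin m → Fin n → F, ∀ i s, w i (q s.succ) - w i (q 0) = x i s := by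
  have hsucc : Function.Injective fun s : Fin N => q s.succ := hq.comp (Fin.succ_injective N)
  refine ⟨fun i => Function.extend (fun s => q s.succ) (x i) 0, fun i s => ?_⟩
  dsimp only
  rw [hsucc.extend_apply, Function.extend_apply' _ _ _ fun ⟨s, hs⟩ => Fin.succ_ne_zero s (hq hs),
    Pi.zero_apply, sub_zero]

noncomputable def pathSubst {m : ℕ} (g : Fin N → ZMod n) (q : Fin (N + 1) → Fin n)
    (w : Fin m → Fin n → F) : ZMod n × ℕ → Matrix (Fin n) (Fin n) F := fun x =>
  if x.1 = 0 then
    if h : x.2 < m then Matrix.diagonal (w ⟨x.2, h⟩) else 0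
  else if h : x.2 < N then
    if x.1 = g ⟨x.2, h⟩ then Matrix.single (q (Fin.castSucc ⟨x.2, h⟩)) (q (Fin.succ ⟨x.2, h⟩)) 1
    else 0
  else 0

variable {m : ℕ} {g : Fin N → ZMod n} {q : Fin (N + 1) → Fin n}

theorem pathSubst_mem (hq : IsGradedPath g q) (w : Fin m → Fin n → F) (d : ZMod n) (i : ℕ) :
    pathSubst g q w (d, i) ∈ Lcomp F n d := by
  unfold pathSubst
  split_ifs with hd hi hi hdg
  · subst hd
    rw [← Matrix.sum_single_eq_diagonal]
    refine Submodule.sum_mem _ fun p _ => ?_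
    rw [← mul_one (w _ p), ← smul_eq_mul, ← Matrix.smul_single]
    exact Submodule.smul_mem _ _ (Submodule.subset_span ⟨p, p, le_rfl, sub_self _, rfl⟩)
  all_goals try exact Submodule.zero_mem _
  exact Submodule.subset_span ⟨_, _, (hq.1 Fin.castSucc_lt_succ).le, (hq.2 _).trans hdg.symm,
    rfl⟩

theorem lift_pathSubst_yv (w : Fin m → Fin n → F) (i : Fin m) :
    lift F (pathSubst g q w) (yv F n i) = Matrix.diagonal (w i) := by
  simp [yv, pathSubst]

theorem isDiag_lift_pathSubst_yv (w : Fin m → Fin n → F) (i : ℕ) :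
    (lift F (pathSubst g q w) (yv F n i)).IsDiag := by
  simp only [yv, lift_of_apply, pathSubst, if_true]
  split_ifs
  exacts [Matrix.isDiag_diagonal _, Matrix.isDiag_zero]

theorem lift_pathSubst_zvG {k : ℕ} {g : Fin (k + 1) → ZMod n} {q : Fin (k + 1 + 1) → Fin n}
    (hg : ∀ j, g j ≠ 0) (w : Fin m → Fin n → F) (j : Fin (k + 1)) :
    lift F (pathSubst g q w) (zvG F n k g j) = Matrix.single (q j.castSucc) (q j.succ) 1 := by
  simp [zvG, pathSubst, hg j, j.isLt]

end GradedPath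

section Evaluation

variable {F : Type} [Field F] {n k m : ℕ} {g : Fin (k + 1) → ZMod n} {q : Fin (k + 1 + 1) → Fin n}

theorem lift_pathSubst_BgF (hg : ∀ j, g j ≠ 0) (hq : StrictMono q) (w : Fin m → Fin n → F)
    (a : Fin m → Fin (k + 1) → ℕ) :
    lift F (pathSubst g q w) (BgF F n k m g 1 a)
      = Matrix.single (q 0) (q (Fin.last _))
          (∏ s, ∏ i, (w i (q s.succ) - w i (q 0)) ^ a i s) := by
  -- writing the image `e_{q₀,q₁}` of the head `z₀` as `⁅e_{q₀,q₀}, e_{q₀,q₁}⁆` gives all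
  -- `k + 1` blocks the shape required by `Matrix.foldl_lie_single_path`
  have hz : Matrix.single (q (Fin.castSucc 0)) (q (Fin.succ 0)) (1 : F)
      = ⁅Matrix.single (q 0) (q 0) (1 : F),
          Matrix.single (q (Fin.castSucc 0)) (q (Fin.succ 0)) 1⁆ := by
    rw [Fin.castSucc_zero, Matrix.lie_single_single (hq.injective.ne (Fin.succ_ne_zero 0)),
      mul_one]
  have hblocks : Matrix.single (q (Fin.castSucc 0)) (q (Fin.succ 0)) 1 ::
      ((List.finRange (k + 1)).flatMap fun s =>
        (if s = 0 then [] else [zvG F n k g ((1 : Equiv.Perm (Fin (k + 1))) s)]) ++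
          ybT F n k s 0 ((List.finRange m).map a)).map (lift F (pathSubst g q w))
      = (List.finRange (k + 1)).flatMap fun s =>
          Matrix.single (q s.castSucc) (q s.succ) 1 ::
            (ybT F n k s 0 ((List.finRange m).map a)).map (lift F (pathSubst g q w)) := by
    simp [List.map_flatMap, List.finRange_succ, List.flatMap_map, Fin.succ_ne_zero,
      lift_pathSubst_zvG hg]
  unfold BgF BgEl
  rw [LieHom.map_lnw, lift_pathSubst_zvG hg, hz, ← List.foldl_cons, hblocks,
    Matrix.foldl_lie_single_path _ _ (fun s => hq.injective.ne (Fin.succ_ne_zero s)) _ ?diag,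
    one_mul]
  case diag =>
    intro s M hM
    obtain ⟨x, hx, rfl⟩ := List.mem_map.1 hM
    obtain ⟨i, rfl⟩ := exists_eq_yv_of_mem_ybT hx
    exact isDiag_lift_pathSubst_yv w i
  congr 1
  refine Fintype.prod_congr _ _ fun s => ?_
  rw [List.map_map, prod_map_ybT]
  simp [lift_pathSubst_yv]

end Evaluation

open MvPolynomial in
theorem eq_zero_of_forall_sum_mul_prod_pow_eq_zero {R σ α : Type*} [CommRing R] [IsDomain R]
    [Infinite R] [Fintype σ] {e : α → σ → ℕ} (he : Function.Injective e) {s : Finset α}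
    {c : α → R} (h : ∀ x : σ → R, ∑ a ∈ s, c a * ∏ i, x i ^ e a i = 0) : ∀ a ∈ s, c a = 0 := by
  classical
  let d : α → σ →₀ ℕ := fun a => Finsupp.equivFunOnFinite.symm (e a)
  have hd : Function.Injective d := Finsupp.equivFunOnFinite.symm.injective.comp he
  have hP : ∑ a ∈ s, monomial (d a) (c a) = 0 := MvPolynomial.funext fun x => by
    simpa [d, eval_monomial, Finsupp.prod_fintype] using h x
  intro a ha
  have := congrArg (coeff (d a)) hP
  rwa [coeff_sum, Finset.sum_eq_single a (fun b _ hba => by rw [coeff_monomial,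
    if_neg (hd.ne hba)]) (absurd ha), coeff_monomial, if_pos rfl, coeff_zero] at this

theorem stmt17_general (F : Type) [Field F] [Infinite F] (n k m : ℕ)
    (g : Fin (k + 1) → ZMod n) (hg : ∀ j, g j ≠ 0) (hsum : ∑ j, (g j).val ≤ n - 1)
    (s : Finset (Fin m → Fin (k + 1) → ℕ)) (c : (Fin m → Fin (k + 1) → ℕ) → F)
    (h : (∑ a ∈ s, c a • BgF F n k m g 1 a) ∈ gradedId F n) :
    ∀ a ∈ s, c a = 0 := by
  have hpos : 0 < ∑ j, (g j).val :=
    Finset.sum_pos' (fun _ _ => Nat.zero_le _) ⟨0, Finset.mem_univ _, ZMod.val_pos.2 (hg 0)⟩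
  obtain ⟨q, hq⟩ := exists_isGradedPath g hg (by omega)
  refine eq_zero_of_forall_sum_mul_prod_pow_eq_zero (e := Function.uncurry)
    Function.uncurry_injective fun x => ?_
  obtain ⟨w, hw⟩ := exists_sub_eq_of_injective hq.1.injective fun i j => x (i, j)
  have hval := h _ (fun d i => pathSubst_mem hq w d i)
  have hentry := congrFun (congrFun hval (q 0)) (q (Fin.last _))
  simp only [map_sum, map_smul, lift_pathSubst_BgF hg hq.1, hw, Matrix.smul_single,
    Matrix.sum_apply, Matrix.single_apply_same, smul_eq_mul, Matrix.zero_apply] at hentry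
  rw [← hentry]
  refine Finset.sum_congr rfl fun a _ => ?_
  rw [Fintype.prod_prod_type, Finset.prod_comm]
  rfl

/-- Let `n ≥ 3` and `z₁,…,z_{k+1}` have nonzero degrees `g₁,…,g_{k+1}`
with `g₁ + ⋯ + g_{k+1} ≤ n - 1` (as integers in `{1,…,n-1}`). The commutators
`[z₁, a₁⁽¹⁾y₁,…,aₘ⁽¹⁾yₘ, z₂, a₁⁽²⁾y₁,…,aₘ⁽²⁾yₘ, …, z_{k+1}, a₁⁽ᵏ⁺¹⁾y₁,…,aₘ⁽ᵏ⁺¹⁾yₘ]`, over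
all choices of nonnegative exponent matrices `a`, are linearly independent modulo the ideal
of `ZMod n`-graded identities of `UT_n(F)⁽⁻⁾`: no nontrivial `F`-linear combination of
distinct such commutators is a graded identity of `UT_n(F)⁽⁻⁾`. -/
theorem stmt17 (F : Type) [Field F] [Infinite F] (n k m : ℕ) (hn : 3 ≤ n)
    (g : Fin (k + 1) → ZMod n) (hg : ∀ j, g j ≠ 0) (hsum : ∑ j, (g j).val ≤ n - 1)
    (s : Finset (Fin m → Fin (k + 1) → ℕ)) (c : (Fin m → Fin (k + 1) → ℕ) → F)
    (h : (∑ a ∈ s, c a • BgF F n k m g 1 a) ∈ gradedId F n) :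
    ∀ a ∈ s, c a = 0 :=
  stmt17_general F n k m g hg hsum s c h
end
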